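/- arXiv:1112.1535 — 5 statements merged into one kernel-verified Lean document; each statement's English description precedes it below -/
import Mathlib

section
/- Let x = (x_1, ..., x_n) with 0 < x_1 < x_2 < ... < x_n, and let μ = (μ_1, ..., μ_n) be integers with 0 ≤ μ_1 < μ_2 < ... < μ_n. Then the generalized Vandermonde determinant GVD(x; μ), the n×n determinant with (i,j) entry x_j^{μ_i}, is strictly positive. -/
/-!
Induct on `n`. Replacing the last column `(x_n ^ μ_i)ᵢ` by `(t ^ μ_i)ᵢ` turns the determinant into
a polynomial in `t` with at most `n` monomials. It vanishes at `x_1, …, x_{n-1}`, and its leading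
coefficient is the cofactor of the corner entry, the `(n-1)`-determinant, positive by induction.
By Descartes' rule of signs it has at most `n - 1` positive roots, hence none in `[x_n, ∞)`;
being eventually positive, it is positive at `x_n`.
-/

open Polynomial Finset Filter Matrix

namespace Polynomial

theorem signVariations_lt_card_support {R : Type*} [Semiring R] [LinearOrder R] {P : R[X]}
    (hP : P ≠ 0) : P.signVariations < #P.support := by
  have hsupp : P.support = (range (P.natDegree + 1)).filter (P.coeff · ≠ 0) := by
    ext k
    simp only [mem_support_iff, mem_filter, mem_range]
    exact ⟨fun hk => ⟨Nat.lt_succ_of_le (le_natDegree_of_ne_zero hk), hk⟩, And.right⟩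
  have hlen : ((P.coeffList.map SignType.sign).filter (· ≠ 0)).length = #P.support := by
    rw [hsupp, coeffList, degree_eq_natDegree hP, card_def, filter_val, range_val,
      Multiset.range, Multiset.filter_coe, Multiset.coe_card]
    simp only [ne_eq, decide_not, List.map_reverse, List.map_map, Function.comp_def,
      List.filter_reverse, List.filter_map, sign_eq_zero_iff, List.length_reverse, List.length_map]
    rfl
  have hdestutter :=
    (List.destutter_sublist (· ≠ ·) ((P.coeffList.map SignType.sign).filter (· ≠ 0))).length_le
  have hsupp_pos : 0 < #P.support := card_pos.mpr (support_nonempty.mpr hP)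
  unfold signVariations
  omega

section Monomials

variable {R ι : Type*} [CommRing R] [Fintype ι] (a : ι → R)

theorem coeff_sum_C_mul_X_pow {e : ι → ℕ} (he : e.Injective) (k : ι) :
    (∑ i, C (a i) * X ^ e i).coeff (e k) = a k := by
  rw [finsetSum_coeff, Fintype.sum_eq_single k fun i hi => ?_, coeff_C_mul_X_pow, if_pos rfl]
  rw [coeff_C_mul_X_pow, if_neg (he.ne hi.symm)]

theorem card_support_sum_C_mul_X_pow_le (e : ι → ℕ) :
    #(∑ i, C (a i) * X ^ e i).support ≤ Fintype.card ι := by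
  classical
  calc #(∑ i, C (a i) * X ^ e i).support ≤ #(univ.image e) := by
        refine card_le_card fun k hk => ?_
        contrapose! hk
        rw [mem_support_iff, not_not, finsetSum_coeff]
        refine sum_eq_zero fun i _ => ?_
        rw [coeff_C_mul_X_pow, if_neg fun hki => hk (mem_image.mpr ⟨i, mem_univ i, hki.symm⟩)]
    _ ≤ Fintype.card ι := card_image_le

theorem leadingCoeff_sum_C_mul_X_pow {e : ι → ℕ} (he : e.Injective) {k : ι}
    (hk : ∀ i, e i ≤ e k) (ha : a k ≠ 0) : (∑ i, C (a i) * X ^ e i).leadingCoeff = a k := by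
  have hdeg : (∑ i, C (a i) * X ^ e i).natDegree = e k :=
    natDegree_eq_of_le_of_coeff_ne_zero
      (natDegree_sum_le_of_forall_le _ _ fun i _ => (natDegree_C_mul_X_pow_le _ _).trans (hk i))
      (by rwa [coeff_sum_C_mul_X_pow a he])
  rw [leadingCoeff, hdeg, coeff_sum_C_mul_X_pow a he]

end Monomials

section PositiveRoots

variable {R : Type*} [CommRing R] [LinearOrder R] [IsStrictOrderedRing R] {P : R[X]}
  {s : Finset R}

theorem card_lt_card_support_of_forall_pos_isRoot (hP : P ≠ 0) (hpos : ∀ t ∈ s, 0 < t)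
    (hroot : ∀ t ∈ s, P.IsRoot t) : #s < #P.support :=
  calc #s ≤ #(P.roots.filter (0 < ·)).toFinset :=
        card_le_card fun t ht => by simpa [hP, hpos t ht] using hroot t ht
    _ ≤ P.roots.countP (0 < ·) := by
        rw [Multiset.countP_eq_card_filter]; exact Multiset.toFinset_card_le _
    _ ≤ P.signVariations := roots_countP_pos_le_signVariations P
    _ < #P.support := signVariations_lt_card_support hP

theorem mem_of_isRoot_of_card_support_le (hP : P ≠ 0) (hpos : ∀ t ∈ s, 0 < t)
    (hroot : ∀ t ∈ s, P.IsRoot t) (hcard : #P.support ≤ #s + 1) {t : R} (ht : 0 < t)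
    (htroot : P.IsRoot t) : t ∈ s := by
  by_contra hts
  have := card_lt_card_support_of_forall_pos_isRoot hP (s := insert t s)
    ((forall_mem_insert _ _ _).mpr ⟨ht, hpos⟩) ((forall_mem_insert _ _ _).mpr ⟨htroot, hroot⟩)
  rw [card_insert_of_notMem hts] at this
  omega

end PositiveRoots

theorem eventually_atTop_eval_pos {𝕜 : Type*} [NormedField 𝕜] [LinearOrder 𝕜]
    [IsStrictOrderedRing 𝕜] [OrderTopology 𝕜] {P : 𝕜[X]} (h : 0 < P.leadingCoeff) :
    ∀ᶠ t in atTop, 0 < P.eval t := by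
  rcases lt_or_ge 0 P.degree with hdeg | hdeg
  · exact (tendsto_atTop_of_leadingCoeff_nonneg P hdeg h.le).eventually_gt_atTop 0
  · rw [leadingCoeff, natDegree_eq_zero_iff_degree_le_zero.mpr hdeg] at h
    rw [eq_C_of_degree_le_zero hdeg]
    exact .of_forall fun _ => by simpa using h

theorem eval_pos_of_forall_ge_not_isRoot {P : ℝ[X]} (h : 0 < P.leadingCoeff) {y : ℝ}
    (hy : ∀ t ≥ y, ¬P.IsRoot t) : 0 < P.eval y := by
  obtain ⟨z, hzy, hz⟩ := ((eventually_ge_atTop y).and (eventually_atTop_eval_pos h)).exists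
  by_contra! hneg
  obtain ⟨r, hr, hr0⟩ := intermediate_value_Icc hzy P.continuous.continuousOn ⟨hneg, hz.le⟩
  exact hy r hr.1 hr0

theorem eval_pos_of_card_support_le {P : ℝ[X]} (h : 0 < P.leadingCoeff) {s : Finset ℝ}
    (hpos : ∀ t ∈ s, 0 < t) (hroot : ∀ t ∈ s, P.IsRoot t) (hcard : #P.support ≤ #s + 1)
    {y : ℝ} (hy0 : 0 < y) (hy : ∀ t ∈ s, t < y) : 0 < P.eval y := by
  refine eval_pos_of_forall_ge_not_isRoot h fun t hty htroot => (hy t ?_).not_ge hty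
  exact mem_of_isRoot_of_card_support_le (leadingCoeff_ne_zero.mp h.ne') hpos hroot hcard
    (hy0.trans_le hty) htroot

end Polynomial

namespace Matrix

theorem det_updateCol_eq_sum_adjugate_mul {n R : Type*} [Fintype n] [DecidableEq n] [CommRing R]
    (A : Matrix n n R) (j : n) (b : n → R) :
    (A.updateCol j b).det = ∑ i, A.adjugate j i * b i := by
  rw [← cramer_apply, cramer_eq_adjugate_mulVec]
  rfl

def genVandermonde {R : Type*} [CommRing R] {n : ℕ} (x : Fin n → R) (μ : Fin n → ℕ) :
    Matrix (Fin n) (Fin n) R :=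
  of fun i j => x j ^ μ i

theorem adjugate_genVandermonde_last_last {R : Type*} [CommRing R] {n : ℕ}
    (x : Fin (n + 1) → R) (μ : Fin (n + 1) → ℕ) :
    (genVandermonde x μ).adjugate (Fin.last n) (Fin.last n) =
      (genVandermonde (x ∘ Fin.castSucc) (μ ∘ Fin.castSucc)).det := by
  rw [adjugate_fin_succ_eq_det_submatrix, Fin.succAbove_last, Even.neg_one_pow ⟨_, rfl⟩, one_mul]
  rfl

theorem det_genVandermonde_pos_of_det_castSucc_pos {n : ℕ} {x : Fin (n + 1) → ℝ}
    {μ : Fin (n + 1) → ℕ} (hxpos : ∀ j, 0 < x j) (hx : StrictMono x) (hμ : StrictMono μ)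
    (hminor : 0 < (genVandermonde (x ∘ Fin.castSucc) (μ ∘ Fin.castSucc)).det) :
    0 < (genVandermonde x μ).det := by
  set V := genVandermonde x μ
  set p : ℝ[X] := ∑ i, C (V.adjugate (Fin.last n) i) * X ^ μ i
  have heval (t : ℝ) : p.eval t = (V.updateCol (Fin.last n) fun i => t ^ μ i).det := by
    simp [p, eval_finsetSum, det_updateCol_eq_sum_adjugate_mul]
  have hcorner := adjugate_genVandermonde_last_last x μ
  have hlead : 0 < p.leadingCoeff := by
    rw [leadingCoeff_sum_C_mul_X_pow _ hμ.injective (fun i => hμ.monotone (Fin.le_last i))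
      (hcorner ▸ hminor.ne'), hcorner]
    exact hminor
  have hroot (k : Fin n) : p.IsRoot (x k.castSucc) := by
    rw [IsRoot, heval]
    exact det_updateCol_eq_zero (Fin.castSucc_lt_last k).ne
  have hcard : #(univ.image (x ∘ Fin.castSucc)) = n := by
    rw [card_image_of_injective _ (hx.injective.comp (Fin.castSucc_injective n)), card_fin]
  have hdet : V.det = p.eval (x (Fin.last n)) := by
    rw [heval]
    exact congrArg det (updateCol_eq_self _ _).symm
  rw [hdet]
  refine eval_pos_of_card_support_le hlead (s := univ.image (x ∘ Fin.castSucc))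
    (by simp [hxpos]) (by simpa using hroot) ?_ (hxpos _) ?_
  · rw [hcard]
    exact (card_support_sum_C_mul_X_pow_le _ _).trans (Fintype.card_fin _).le
  · simpa using fun k => hx (Fin.castSucc_lt_last k)

end Matrix

/-- The generalized Vandermonde determinant `det (x_j ^ μ_i)` is strictly
positive for `0 < x_1 < ⋯ < x_n` and integer exponents `0 ≤ μ_1 < ⋯ < μ_n`. -/
theorem generalized_vandermonde_pos (n : ℕ) (x : Fin n → ℝ) (μ : Fin n → ℕ)
    (hxpos : ∀ j, 0 < x j) (hx : StrictMono x) (hμ : StrictMono μ) :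
    0 < Matrix.det (Matrix.of fun i j : Fin n => x j ^ μ i) := by
  induction n with
  | zero => simp
  | succ n ih =>
    exact det_genVandermonde_pos_of_det_castSucc_pos hxpos hx hμ
      (ih _ _ (fun _ => hxpos _) (hx.comp Fin.strictMono_castSucc)
        (hμ.comp Fin.strictMono_castSucc))
end

section
/- Laplace's Expansion Theorem: Let A be an n×n matrix over a commutative ring and let c = (c_1 < c_2 < ... < c_k) be a fixed vector of k column indices, 1 ≤ k < n. Then det(A) = ∑_r (-1)^{|r|+|c|} det(S(A; r, c)) det(S̄(A; r, c)), where the sum is over all strictly increasing vectors r = (r_1 < ... < r_k) of k row indices, |r| = r_1 + ... + r_k, |c| = c_1 + ... + c_k, S(A; r, c) is the k×k submatrix of A on rows r and columns c, and S̄(A; r, c) is the complementary (n−k)×(n−k) submatrix obtained by deleting rows r and columns c. -/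
open Finset Equiv Equiv.Perm

namespace LaplaceAux

variable {n k : ℕ}

lemma compl_card (s : Finset (Fin n)) (hs : s.card = k) : sᶜ.card = n - k := by
  simp [Finset.card_compl, hs]

def E (s : Finset (Fin n)) (hs : s.card = k) : Fin k ⊕ Fin (n - k) ≃ Fin n :=
  finSumEquivOfFinset hs (compl_card s hs)

lemma E_inl (s : Finset (Fin n)) (hs : s.card = k) (i : Fin k) :
    E s hs (Sum.inl i) = s.orderEmbOfFin hs i := rfl

lemma E_inr (s : Finset (Fin n)) (hs : s.card = k) (i : Fin (n - k)) :
    E s hs (Sum.inr i) = sᶜ.orderEmbOfFin (compl_card s hs) i := rfl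

def splitE (hkn : k ≤ n) : Fin n ≃ Fin k ⊕ Fin (n - k) :=
  (finCongr (Nat.add_sub_cancel' hkn).symm).trans finSumFinEquiv.symm

lemma splitE_symm_inl (hkn : k ≤ n) (j : Fin k) :
    ((splitE hkn).symm (Sum.inl j) : ℕ) = (j : ℕ) := by
  simp [splitE]

lemma splitE_symm_inr (hkn : k ≤ n) (j : Fin (n - k)) :
    ((splitE hkn).symm (Sum.inr j) : ℕ) = k + (j : ℕ) := by
  simp [splitE]

def shuffle (hkn : k ≤ n) (s : Finset (Fin n)) (hs : s.card = k) : Perm (Fin n) :=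
  (splitE hkn).trans (E s hs)

/-- Case 1: a pred-closed set of card `k` consists of values `< k`. -/
lemma lt_of_predClosed {s : Finset (Fin n)} (hs : s.card = k)
    (H : ∀ a ∈ s, ∀ b : Fin n, (b : ℕ) + 1 = (a : ℕ) → b ∈ s) :
    ∀ a ∈ s, (a : ℕ) < k := by
  have down : ∀ (d : ℕ) (a : Fin n), a ∈ s → ∀ b : Fin n, (b : ℕ) + d = (a : ℕ) → b ∈ s := by
    intro d
    induction d with
    | zero => intro a ha b hb; have : b = a := Fin.ext (by omega); exact this ▸ ha
    | succ d ih =>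
      intro a ha b hb
      have ha1 : 1 ≤ (a : ℕ) := by omega
      have hc : (⟨(a : ℕ) - 1, by omega⟩ : Fin n) ∈ s :=
        H a ha _ (by show (a : ℕ) - 1 + 1 = (a : ℕ); omega)
      exact ih _ hc b (by show (b : ℕ) + d = (a : ℕ) - 1; omega)
  intro a ha
  have hsub : Finset.Iic a ⊆ s := by
    intro b hb
    rw [Finset.mem_Iic] at hb
    exact down ((a : ℕ) - (b : ℕ)) a ha b (by omega)
  have := Finset.card_le_card hsub
  rw [Fin.card_Iic, hs] at this
  omega

lemma sign_shuffle_aux (hkn : k ≤ n) :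
    ∀ (N : ℕ) (s : Finset (Fin n)) (hs : s.card = k), (∑ i ∈ s, (i : ℕ)) = N →
      sign (shuffle hkn s hs) = (-1) ^ N * (-1) ^ (∑ i : Fin k, (i : ℕ)) := by
  intro N
  induction N using Nat.strong_induction_on with
  | _ N ih =>
  intro s hs hsum
  by_cases H : ∀ a ∈ s, ∀ b : Fin n, (b : ℕ) + 1 = (a : ℕ) → b ∈ s
  · -- s is the initial segment {0, ..., k-1}
    have hlt : ∀ a ∈ s, (a : ℕ) < k := lt_of_predClosed hs H
    have hmem : ∀ i : Fin k, (Fin.castLE hkn i) ∈ s := by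
      have himg : s = Finset.image (Fin.castLE hkn) Finset.univ := by
        apply Finset.eq_of_subset_of_card_le
        · intro a ha
          exact Finset.mem_image.2 ⟨⟨(a : ℕ), hlt a ha⟩, Finset.mem_univ _, Fin.ext rfl⟩
        · rw [Finset.card_image_of_injective _ (Fin.castLE_injective hkn), hs]
          simp
      intro i
      rw [himg]
      exact Finset.mem_image.2 ⟨i, Finset.mem_univ _, rfl⟩
    have embS : ∀ i, s.orderEmbOfFin hs i = Fin.castLE hkn i := by
      have := Finset.orderEmbOfFin_unique hs (f := fun i => Fin.castLE hkn i)
        (fun i => hmem i) (fun i j hij => Fin.strictMono_castLE hkn hij)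
      exact fun i => (congrFun this i).symm
    have embC : ∀ i : Fin (n - k),
        sᶜ.orderEmbOfFin (compl_card s hs) i = ⟨k + (i : ℕ), by omega⟩ := by
      have := Finset.orderEmbOfFin_unique (compl_card s hs)
        (f := fun i : Fin (n - k) => (⟨k + (i : ℕ), by omega⟩ : Fin n))
        (fun i => by
          rw [Finset.mem_compl]
          intro hmem'
          have := hlt _ hmem'
          simp at this)
        (fun i j hij => by rw [Fin.lt_def] at hij ⊢; exact Nat.add_lt_add_left hij k)
      exact fun i => (congrFun this i).symm
    have hone : shuffle hkn s hs = 1 := by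
      apply Equiv.ext
      intro x
      obtain ⟨y, rfl⟩ : ∃ y, (splitE hkn).symm y = x := ⟨splitE hkn x, Equiv.symm_apply_apply _ _⟩
      show E s hs (splitE hkn ((splitE hkn).symm y)) = _
      rw [Equiv.apply_symm_apply, Equiv.Perm.one_apply]
      cases y with
      | inl j =>
        rw [E_inl, embS]
        exact Fin.ext (by rw [splitE_symm_inl]; rfl)
      | inr j =>
        rw [E_inr, embC]
        exact Fin.ext (by rw [splitE_symm_inr])
    have hNT : N = ∑ i : Fin k, (i : ℕ) := by
      rw [← hsum]
      rw [show s = Finset.image (Fin.castLE hkn) Finset.univ from by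
        apply Finset.eq_of_subset_of_card_le
        · intro a ha
          exact Finset.mem_image.2 ⟨⟨(a : ℕ), hlt a ha⟩, Finset.mem_univ _, Fin.ext rfl⟩
        · rw [Finset.card_image_of_injective _ (Fin.castLE_injective hkn), hs]; simp]
      rw [Finset.sum_image (fun x _ y _ h => Fin.castLE_injective hkn h)]
      rfl
    rw [hone, hNT]
    rw [← pow_add, ← two_mul, pow_mul]
    norm_num
  · push_neg at H
    obtain ⟨a, has, b, hb1, hbs⟩ := H
    set s' : Finset (Fin n) := insert b (s.erase a) with hs'def
    have hbna : b ≠ a := by intro h; rw [h] at hb1; omega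
    have hbe : b ∉ s.erase a := fun h => hbs (Finset.mem_of_mem_erase h)
    have hk1 : 1 ≤ k := by
      rw [← hs]; exact Finset.card_pos.2 ⟨a, has⟩
    have hs' : s'.card = k := by
      rw [hs'def, Finset.card_insert_of_notMem hbe, Finset.card_erase_of_mem has, hs]
      omega
    have hans' : a ∉ s' := by
      rw [hs'def, Finset.mem_insert]
      rintro (h | h)
      · exact hbna h.symm
      · exact (Finset.notMem_erase a s) h
    have hbs' : b ∈ s' := Finset.mem_insert_self _ _
    have mem_s'_iff : ∀ x : Fin n, x ∈ s' ↔ Equiv.swap b a x ∈ s := by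
      intro x
      by_cases hxb : x = b
      · subst hxb
        rw [Equiv.swap_apply_left]
        simp [hbs', has]
      · by_cases hxa : x = a
        · subst hxa
          rw [Equiv.swap_apply_right]
          simp [hans', hbs]
        · rw [Equiv.swap_apply_of_ne_of_ne hxb hxa, hs'def, Finset.mem_insert,
            Finset.mem_erase]
          constructor
          · rintro (h | h)
            · exact absurd h hxb
            · exact h.2
          · intro h; exact Or.inr ⟨hxa, h⟩
    have hsum' : (∑ i ∈ s', (i : ℕ)) + 1 = N := by
      rw [hs'def, Finset.sum_insert hbe, ← hsum, ← Finset.add_sum_erase s _ has]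
      omega
    -- row embedding claim
    have rowEmb : (fun i => Equiv.swap b a (s'.orderEmbOfFin hs' i)) = ⇑(s.orderEmbOfFin hs) := by
      apply Finset.orderEmbOfFin_unique hs
      · intro i
        exact (mem_s'_iff _).1 (Finset.orderEmbOfFin_mem s' hs' i)
      · intro i j hij
        have hxy : s'.orderEmbOfFin hs' i < s'.orderEmbOfFin hs' j :=
          (s'.orderEmbOfFin hs').strictMono hij
        set x := s'.orderEmbOfFin hs' i with hx
        set y := s'.orderEmbOfFin hs' j with hy
        have hxs' : x ∈ s' := Finset.orderEmbOfFin_mem s' hs' i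
        have hys' : y ∈ s' := Finset.orderEmbOfFin_mem s' hs' j
        have hxa : x ≠ a := fun h => hans' (h ▸ hxs')
        have hya : y ≠ a := fun h => hans' (h ▸ hys')
        show Equiv.swap b a x < Equiv.swap b a y
        by_cases hxb : x = b
        · have hyb : y ≠ b := fun h => by rw [hxb, h] at hxy; exact lt_irrefl _ hxy
          rw [hxb, Equiv.swap_apply_left, Equiv.swap_apply_of_ne_of_ne hyb hya]
          rw [Fin.lt_def] at hxy ⊢
          rw [hxb] at hxy
          have : (y : ℕ) ≠ (a : ℕ) := fun h => hya (Fin.ext h)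
          omega
        · by_cases hyb : y = b
          · rw [hyb, Equiv.swap_apply_left, Equiv.swap_apply_of_ne_of_ne hxb hxa]
            rw [Fin.lt_def] at hxy ⊢
            rw [hyb] at hxy
            omega
          · rwa [Equiv.swap_apply_of_ne_of_ne hxb hxa,
              Equiv.swap_apply_of_ne_of_ne hyb hya]
    -- column embedding claim
    have colEmb : (fun i => Equiv.swap b a (s'ᶜ.orderEmbOfFin (compl_card s' hs') i)) =
        ⇑(sᶜ.orderEmbOfFin (compl_card s hs)) := by
      apply Finset.orderEmbOfFin_unique (compl_card s hs)
      · intro i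
        have := Finset.orderEmbOfFin_mem s'ᶜ (compl_card s' hs') i
        rw [Finset.mem_compl] at this ⊢
        exact fun h => this ((mem_s'_iff _).2 h)
      · intro i j hij
        have hxy : s'ᶜ.orderEmbOfFin (compl_card s' hs') i <
            s'ᶜ.orderEmbOfFin (compl_card s' hs') j :=
          (s'ᶜ.orderEmbOfFin (compl_card s' hs')).strictMono hij
        set x := s'ᶜ.orderEmbOfFin (compl_card s' hs') i with hx
        set y := s'ᶜ.orderEmbOfFin (compl_card s' hs') j with hy
        have hxs' : x ∉ s' := Finset.mem_compl.1 (Finset.orderEmbOfFin_mem _ _ i)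
        have hys' : y ∉ s' := Finset.mem_compl.1 (Finset.orderEmbOfFin_mem _ _ j)
        have hxb : x ≠ b := fun h => hxs' (h ▸ hbs')
        have hyb : y ≠ b := fun h => hys' (h ▸ hbs')
        show Equiv.swap b a x < Equiv.swap b a y
        by_cases hxa : x = a
        · have hya : y ≠ a := fun h => by rw [hxa, h] at hxy; exact lt_irrefl _ hxy
          rw [hxa, Equiv.swap_apply_right, Equiv.swap_apply_of_ne_of_ne hyb hya]
          rw [Fin.lt_def] at hxy ⊢
          rw [hxa] at hxy
          omega
        · by_cases hya : y = a
          · rw [hya, Equiv.swap_apply_right, Equiv.swap_apply_of_ne_of_ne hxb hxa]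
            rw [Fin.lt_def] at hxy ⊢
            rw [hya] at hxy
            have : (x : ℕ) ≠ (b : ℕ) := fun h => hxb (Fin.ext h)
            omega
          · rwa [Equiv.swap_apply_of_ne_of_ne hxb hxa,
              Equiv.swap_apply_of_ne_of_ne hyb hya]
    have hperm : shuffle hkn s hs = Equiv.swap b a * shuffle hkn s' hs' := by
      apply Equiv.ext
      intro x
      show E s hs (splitE hkn x) = Equiv.swap b a (E s' hs' (splitE hkn x))
      rcases splitE hkn x with j | j
      · rw [E_inl, E_inl, ← congrFun rowEmb j]
      · rw [E_inr, E_inr, ← congrFun colEmb j]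
    rw [hperm, map_mul, sign_swap hbna, ih _ (by omega) s' hs' rfl]
    rw [show N = (∑ i ∈ s', (i : ℕ)) + 1 from by omega, pow_succ]
    simp [mul_comm, mul_left_comm, mul_assoc]

lemma sign_shuffle (hkn : k ≤ n) (s : Finset (Fin n)) (hs : s.card = k) :
    sign (shuffle hkn s hs) =
      (-1) ^ (∑ i ∈ s, (i : ℕ)) * (-1) ^ (∑ i : Fin k, (i : ℕ)) :=
  sign_shuffle_aux hkn _ s hs rfl


/-- Membership lemmas for `E`. -/
lemma E_inl_mem (s : Finset (Fin n)) (hs : s.card = k) (j : Fin k) :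
    E s hs (Sum.inl j) ∈ s := by
  rw [E_inl]; exact Finset.orderEmbOfFin_mem _ _ _

lemma E_inr_notMem (s : Finset (Fin n)) (hs : s.card = k) (j : Fin (n - k)) :
    E s hs (Sum.inr j) ∉ s := by
  rw [E_inr]; exact Finset.mem_compl.1 (Finset.orderEmbOfFin_mem _ _ _)

lemma E_symm_eq_inl {s : Finset (Fin n)} {hs : s.card = k} {x : Fin n} (hx : x ∈ s) :
    ∃ j, (E s hs).symm x = Sum.inl j := by
  rcases h : (E s hs).symm x with j | j
  · exact ⟨j, rfl⟩
  · have hE : E s hs (Sum.inr j) = x := by rw [← h, Equiv.apply_symm_apply]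
    exact (E_inr_notMem s hs j (hE ▸ hx)).elim

lemma E_symm_eq_inr {s : Finset (Fin n)} {hs : s.card = k} {x : Fin n} (hx : x ∉ s) :
    ∃ j, (E s hs).symm x = Sum.inr j := by
  rcases h : (E s hs).symm x with j | j
  · have hE : E s hs (Sum.inl j) = x := by rw [← h, Equiv.apply_symm_apply]
    exact (hx (hE ▸ E_inl_mem s hs j)).elim
  · exact ⟨j, rfl⟩

/-- The grouping map from (subset, pair of small permutations) to permutations. -/
def psi (C : Finset (Fin n)) (hC : C.card = k)
    (p : {s : Finset (Fin n) // s.card = k} × (Equiv.Perm (Fin k) × Equiv.Perm (Fin (n - k)))) :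
    Equiv.Perm (Fin n) :=
  (E C hC).symm.trans ((Equiv.sumCongr p.2.1 p.2.2).trans (E p.1.1 p.1.2))

lemma psi_apply (C : Finset (Fin n)) (hC : C.card = k) (s : Finset (Fin n)) (hs : s.card = k)
    (α : Equiv.Perm (Fin k)) (β : Equiv.Perm (Fin (n - k))) (x : Fin n) :
    psi C hC ⟨⟨s, hs⟩, (α, β)⟩ x = E s hs (Equiv.sumCongr α β ((E C hC).symm x)) := rfl

lemma psi_mem_iff (C : Finset (Fin n)) (hC : C.card = k) (s : Finset (Fin n)) (hs : s.card = k)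
    (α : Equiv.Perm (Fin k)) (β : Equiv.Perm (Fin (n - k))) (x : Fin n) :
    psi C hC ⟨⟨s, hs⟩, (α, β)⟩ x ∈ s ↔ x ∈ C := by
  by_cases hx : x ∈ C
  · obtain ⟨j, hj⟩ := E_symm_eq_inl (hs := hC) hx
    simp only [psi_apply, hj, Equiv.sumCongr_apply, Sum.map_inl]
    simp only [hx, iff_true]
    exact E_inl_mem s hs (α j)
  · obtain ⟨j, hj⟩ := E_symm_eq_inr (hs := hC) hx
    simp only [psi_apply, hj, Equiv.sumCongr_apply, Sum.map_inr]
    simp only [hx, iff_false]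
    exact E_inr_notMem s hs (β j)

lemma psi_bijective (C : Finset (Fin n)) (hC : C.card = k) :
    Function.Bijective (psi C hC) := by
  constructor
  · rintro ⟨⟨s, hs⟩, α, β⟩ ⟨⟨t, ht⟩, α', β'⟩ h
    have hst : s = t := by
      ext x
      have h1 := psi_mem_iff C hC s hs α β ((psi C hC ⟨⟨s, hs⟩, (α, β)⟩).symm x)
      have h2 := psi_mem_iff C hC t ht α' β' ((psi C hC ⟨⟨s, hs⟩, (α, β)⟩).symm x)
      rw [← h] at h2
      rw [Equiv.apply_symm_apply] at h1 h2
      exact h1.trans h2.symm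
    subst hst
    have hαβ : ∀ y, Equiv.sumCongr α β y = Equiv.sumCongr α' β' y := by
      intro y
      have happ := congrArg (fun σ : Equiv.Perm (Fin n) => σ (E C hC y)) h
      simp only [psi_apply, Equiv.symm_apply_apply] at happ
      exact (E s hs).injective happ
    have hα : α = α' := Equiv.ext fun i => by
      have := hαβ (Sum.inl i); simpa using this
    have hβ : β = β' := Equiv.ext fun i => by
      have := hαβ (Sum.inr i); simpa using this
    subst hα; subst hβ; rfl
  · intro σ
    have hs : (Finset.image (⇑σ) C).card = k := by
      rw [Finset.card_image_of_injective _ σ.injective, hC]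
    set s := Finset.image (⇑σ) C with hsdef
    have hmaps : Set.MapsTo (⇑((E C hC).trans (σ.trans (E s hs).symm)))
        (Set.range Sum.inl) (Set.range Sum.inl) := by
      rintro _ ⟨i, rfl⟩
      have hmem : σ (E C hC (Sum.inl i)) ∈ s := Finset.mem_image_of_mem _ (E_inl_mem C hC i)
      obtain ⟨j, hj⟩ := E_symm_eq_inl (hs := hs) hmem
      exact ⟨j, by simp [Equiv.trans_apply, hj]⟩
    obtain ⟨⟨α, β⟩, hαβ⟩ := Equiv.Perm.mem_sumCongrHom_range_of_perm_mapsTo_inl hmaps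
    refine ⟨⟨⟨s, hs⟩, (α, β)⟩, ?_⟩
    apply Equiv.ext
    intro x
    have hco : Equiv.sumCongr α β = (E C hC).trans (σ.trans (E s hs).symm) := by
      simpa [Equiv.Perm.sumCongrHom_apply] using hαβ
    show E s hs (Equiv.sumCongr α β ((E C hC).symm x)) = σ x
    rw [hco]
    simp [Equiv.trans_apply]

lemma sign_psi (hkn : k ≤ n) (C : Finset (Fin n)) (hC : C.card = k)
    (s : Finset (Fin n)) (hs : s.card = k)
    (α : Equiv.Perm (Fin k)) (β : Equiv.Perm (Fin (n - k))) :
    sign (psi C hC ⟨⟨s, hs⟩, (α, β)⟩) =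
      sign (shuffle hkn s hs) * sign (shuffle hkn C hC) * (sign α * sign β) := by
  have hdecomp : psi C hC ⟨⟨s, hs⟩, (α, β)⟩ =
      ((shuffle hkn C hC).symm.trans
        ((splitE hkn).symm.permCongr (Equiv.sumCongr α β))).trans (shuffle hkn s hs) := by
    apply Equiv.ext
    intro x
    simp [psi, shuffle, Equiv.permCongr_apply]
  rw [hdecomp, sign_trans, sign_trans, sign_symm, sign_permCongr, sign_sumCongr]
  simp [mul_comm, mul_left_comm, mul_assoc]

lemma sign_psi_cast {R : Type*} [CommRing R] (hkn : k ≤ n) (C : Finset (Fin n)) (hC : C.card = k)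
    (s : Finset (Fin n)) (hs : s.card = k)
    (α : Equiv.Perm (Fin k)) (β : Equiv.Perm (Fin (n - k))) :
    ((sign (psi C hC ⟨⟨s, hs⟩, (α, β)⟩) : ℤ) : R) =
      (-1 : R) ^ ((∑ i ∈ s, (i : ℕ)) + ∑ j ∈ C, (j : ℕ)) *
        ((sign α : ℤ) : R) * ((sign β : ℤ) : R) := by
  have h := sign_psi hkn C hC s hs α β
  rw [sign_shuffle hkn s hs, sign_shuffle hkn C hC] at h
  have h2 := congrArg (fun u : ℤˣ => ((u : ℤ) : R)) h
  simp only [Units.val_mul, Units.val_pow_eq_pow_val, Units.val_neg, Units.val_one,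
    Int.cast_mul, Int.cast_pow, Int.cast_neg, Int.cast_one] at h2
  rw [h2]
  have hTT : ((-1 : R) ^ (∑ i : Fin k, (i : ℕ))) * (-1 : R) ^ (∑ i : Fin k, (i : ℕ)) = 1 := by
    rw [← pow_add, ← two_mul, pow_mul]
    norm_num
  calc ((-1 : R) ^ (∑ i ∈ s, (i : ℕ)) * (-1 : R) ^ (∑ i : Fin k, (i : ℕ)) *
          ((-1 : R) ^ (∑ j ∈ C, (j : ℕ)) * (-1 : R) ^ (∑ i : Fin k, (i : ℕ))) *
          (((sign α : ℤ) : R) * ((sign β : ℤ) : R)))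
      = ((-1 : R) ^ (∑ i ∈ s, (i : ℕ)) * (-1 : R) ^ (∑ j ∈ C, (j : ℕ)) *
          (((sign α : ℤ) : R) * ((sign β : ℤ) : R))) *
          (((-1 : R) ^ (∑ i : Fin k, (i : ℕ))) * (-1 : R) ^ (∑ i : Fin k, (i : ℕ))) := by
        ring
    _ = (-1 : R) ^ ((∑ i ∈ s, (i : ℕ)) + ∑ j ∈ C, (j : ℕ)) *
          ((sign α : ℤ) : R) * ((sign β : ℤ) : R) := by
        rw [hTT, mul_one, pow_add]; ring

end LaplaceAux

open LaplaceAux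

/-- **Laplace's Expansion Theorem.** For an `n × n` matrix `A` over a
commutative ring and a fixed set `C` of `k` column indices (`1 ≤ k < n`),
`det A = ∑_R (-1)^{|R|+|C|} det S(A;R,C) det S̄(A;R,C)`, the sum running over
all sets `R` of `k` row indices, where `S(A;R,C)` is the submatrix on rows `R`
and columns `C` (both taken in increasing order) and `S̄(A;R,C)` is the
complementary submatrix. -/
theorem laplace_expansion {R : Type*} [CommRing R] (n k : ℕ)
    (hk1 : 1 ≤ k) (hkn : k < n)
    (A : Matrix (Fin n) (Fin n) R)
    (C : Finset (Fin n)) (hC : C.card = k) :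
    A.det =
      ∑ Rw : {s : Finset (Fin n) // s.card = k},
        (-1 : R) ^ ((∑ i ∈ Rw.1, (i : ℕ)) + ∑ j ∈ C, (j : ℕ)) *
          (A.submatrix (Rw.1.orderEmbOfFin Rw.2) (C.orderEmbOfFin hC)).det *
          (A.submatrix
            ((Rw.1)ᶜ.orderEmbOfFin
              (show ((Rw.1)ᶜ).card = n - k by simp [Finset.card_compl, Rw.2]))
            (Cᶜ.orderEmbOfFin
              (show (Cᶜ).card = n - k by simp [Finset.card_compl, hC]))).det := by
  classical
  have hkn' : k ≤ n := le_of_lt hkn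
  have key : (∑ σ : Equiv.Perm (Fin n), ((Equiv.Perm.sign σ : ℤ) : R) * ∏ i, A (σ i) i) =
      ∑ p : {s : Finset (Fin n) // s.card = k} ×
        (Equiv.Perm (Fin k) × Equiv.Perm (Fin (n - k))),
        ((Equiv.Perm.sign (psi C hC p) : ℤ) : R) * ∏ i, A (psi C hC p i) i :=
    (Function.Bijective.sum_comp (psi_bijective C hC)
      (fun σ => ((Equiv.Perm.sign σ : ℤ) : R) * ∏ i, A (σ i) i)).symm
  rw [Matrix.det_apply', key, Fintype.sum_prod_type]
  refine Finset.sum_congr rfl ?_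
  rintro ⟨s, hs⟩ -
  rw [Fintype.sum_prod_type]
  have hprod : ∀ (α : Equiv.Perm (Fin k)) (β : Equiv.Perm (Fin (n - k))),
      (∏ i, A (psi C hC ⟨⟨s, hs⟩, (α, β)⟩ i) i) =
        (∏ j, (A.submatrix (s.orderEmbOfFin hs) (C.orderEmbOfFin hC)) (α j) j) *
        ∏ j, (A.submatrix (sᶜ.orderEmbOfFin (compl_card s hs))
          (Cᶜ.orderEmbOfFin (compl_card C hC))) (β j) j := by
    intro α β
    rw [← Equiv.prod_comp (E C hC) (fun i => A (psi C hC ⟨⟨s, hs⟩, (α, β)⟩ i) i),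
      Fintype.prod_sum_type]
    congr 1
    · refine Finset.prod_congr rfl fun j _ => ?_
      show A (psi C hC ⟨⟨s, hs⟩, (α, β)⟩ (E C hC (Sum.inl j))) (E C hC (Sum.inl j)) = _
      rw [psi_apply, Equiv.symm_apply_apply]
      simp [E_inl, Matrix.submatrix_apply]
    · refine Finset.prod_congr rfl fun j _ => ?_
      show A (psi C hC ⟨⟨s, hs⟩, (α, β)⟩ (E C hC (Sum.inr j))) (E C hC (Sum.inr j)) = _
      rw [psi_apply, Equiv.symm_apply_apply]
      simp [E_inr, Matrix.submatrix_apply]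
  have hterm : ∀ (α : Equiv.Perm (Fin k)) (β : Equiv.Perm (Fin (n - k))),
      ((Equiv.Perm.sign (psi C hC ⟨⟨s, hs⟩, (α, β)⟩) : ℤ) : R) *
          ∏ i, A (psi C hC ⟨⟨s, hs⟩, (α, β)⟩ i) i =
        ((-1 : R) ^ ((∑ i ∈ s, (i : ℕ)) + ∑ j ∈ C, (j : ℕ)) *
          (((Equiv.Perm.sign α : ℤ) : R) *
            ∏ j, (A.submatrix (s.orderEmbOfFin hs) (C.orderEmbOfFin hC)) (α j) j)) *
          (((Equiv.Perm.sign β : ℤ) : R) *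
            ∏ j, (A.submatrix (sᶜ.orderEmbOfFin (compl_card s hs))
              (Cᶜ.orderEmbOfFin (compl_card C hC))) (β j) j) := by
    intro α β
    rw [hprod α β, sign_psi_cast hkn' C hC s hs α β]
    ring
  calc (∑ α : Equiv.Perm (Fin k), ∑ β : Equiv.Perm (Fin (n - k)),
        ((Equiv.Perm.sign (psi C hC ⟨⟨s, hs⟩, (α, β)⟩) : ℤ) : R) *
          ∏ i, A (psi C hC ⟨⟨s, hs⟩, (α, β)⟩ i) i)
      = ∑ α : Equiv.Perm (Fin k), ∑ β : Equiv.Perm (Fin (n - k)),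
        ((-1 : R) ^ ((∑ i ∈ s, (i : ℕ)) + ∑ j ∈ C, (j : ℕ)) *
          (((Equiv.Perm.sign α : ℤ) : R) *
            ∏ j, (A.submatrix (s.orderEmbOfFin hs) (C.orderEmbOfFin hC)) (α j) j)) *
          (((Equiv.Perm.sign β : ℤ) : R) *
            ∏ j, (A.submatrix (sᶜ.orderEmbOfFin (compl_card s hs))
              (Cᶜ.orderEmbOfFin (compl_card C hC))) (β j) j) := by
        exact Finset.sum_congr rfl fun α _ => Finset.sum_congr rfl fun β _ => hterm α β
    _ = ((-1 : R) ^ ((∑ i ∈ s, (i : ℕ)) + ∑ j ∈ C, (j : ℕ)) *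
          ∑ α : Equiv.Perm (Fin k), ((Equiv.Perm.sign α : ℤ) : R) *
            ∏ j, (A.submatrix (s.orderEmbOfFin hs) (C.orderEmbOfFin hC)) (α j) j) *
          ∑ β : Equiv.Perm (Fin (n - k)), ((Equiv.Perm.sign β : ℤ) : R) *
            ∏ j, (A.submatrix (sᶜ.orderEmbOfFin (compl_card s hs))
              (Cᶜ.orderEmbOfFin (compl_card C hC))) (β j) j := by
        simp only [← Finset.mul_sum]
        rw [← Finset.sum_mul, ← Finset.mul_sum]
    _ = (-1 : R) ^ ((∑ i ∈ s, (i : ℕ)) + ∑ j ∈ C, (j : ℕ)) *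
          (A.submatrix (s.orderEmbOfFin hs) (C.orderEmbOfFin hC)).det *
          (A.submatrix (sᶜ.orderEmbOfFin (compl_card s hs))
            (Cᶜ.orderEmbOfFin (compl_card C hC))).det := by
        rw [← Matrix.det_apply', ← Matrix.det_apply', mul_assoc]
end

section
/- Let β_1 > β_2 > ... > β_n ≥ 0 be integers, and for each strictly increasing admissible row selection r = (r_1, ..., r_n) (with r_i = (i, n+i, r_{i,3}, ..., r_{i,κ_i}), 2n+1 ≤ r_{i,3} < ... < r_{i,κ_i} ≤ K, and the sets {r_{i,3},...,r_{i,κ_i}} for i = 1,...,n partitioning {2n+1, ..., K}), define the weight θ(r) = ∑_{i=1}^n β_i |r_i|, where |r_i| denotes the sum of the entries of r_i. Then θ(r) is uniquely minimized at ρ, where ρ_i = (i, n+i, 2(n−i)+K_{i−1}+3, 2(n−i)+K_{i−1}+4, ..., 2(n−i)+K_i), with K_i = κ_1 + ... + κ_i and K_0 = 0; i.e., θ(r) > θ(ρ) for all admissible r ≠ ρ. -/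
open Finset

/-- The sum of any `m`-element finset of naturals all greater than `a` is at least the sum
of `Ioc a (a+m)`, with equality only for that interval. -/
lemma min_sum_aux (a : ℕ) : ∀ m : ℕ, ∀ A : Finset ℕ, (∀ x ∈ A, a < x) → A.card = m →
    (∑ e ∈ Finset.Ioc a (a + m), e) ≤ ∑ e ∈ A, e ∧
      (A ≠ Finset.Ioc a (a + m) → (∑ e ∈ Finset.Ioc a (a + m), e) < ∑ e ∈ A, e) := by
  intro m
  induction m with
  | zero =>
    intro A hA hc
    have hA0 : A = ∅ := Finset.card_eq_zero.mp hc
    subst hA0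
    simp
  | succ m ih =>
    intro A hA hc
    have hAne : A.Nonempty := Finset.card_pos.mp (by omega)
    set M := A.max' hAne with hM
    have hMmem : M ∈ A := A.max'_mem hAne
    have hsub : A ⊆ Finset.Ioc a M := fun x hx =>
      Finset.mem_Ioc.mpr ⟨hA x hx, A.le_max' x hx⟩
    have hMa : a + m + 1 ≤ M := by
      have h1 := Finset.card_le_card hsub
      rw [Nat.card_Ioc] at h1
      omega
    have hA'card : (A.erase M).card = m := by
      rw [Finset.card_erase_of_mem hMmem, hc]
      omega
    have hA'lt : ∀ x ∈ A.erase M, a < x := fun x hx => hA x (Finset.mem_of_mem_erase hx)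
    obtain ⟨ihle, ihlt⟩ := ih (A.erase M) hA'lt hA'card
    have hsumA : (∑ e ∈ A.erase M, e) + M = ∑ e ∈ A, e := Finset.sum_erase_add A _ hMmem
    have htop : (∑ e ∈ Finset.Ioc a (a + (m + 1)), e)
        = (∑ e ∈ Finset.Ioc a (a + m), e) + (a + m + 1) := by
      have h2 : a + (m + 1) = (a + m) + 1 := by omega
      rw [h2, Finset.sum_Ioc_succ_top (by omega)]
    constructor
    · omega
    · intro hAne2
      rcases Nat.lt_or_ge (a + m + 1) M with hlt | hge
      · omega
      · have hMeq : M = a + m + 1 := by omega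
        have hA'ne : A.erase M ≠ Finset.Ioc a (a + m) := by
          intro h
          apply hAne2
          have h3 : A = insert M (A.erase M) := (Finset.insert_erase hMmem).symm
          rw [h3, h, hMeq]
          ext x
          simp only [Finset.mem_insert, Finset.mem_Ioc]
          omega
        have := ihlt hA'ne
        omega

/-- Positive-part differences of the weights `β`. -/
def dcoef (n : ℕ) (β : ℕ → ℕ) (t : ℕ) : ℕ := if t = n then β n else β t - β (t + 1)

lemma beta_telescope (n : ℕ) (β : ℕ → ℕ) (hβ : ∀ i, 1 ≤ i → i < n → β (i + 1) ≤ β i) :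
    ∀ k i, 1 ≤ i → i + k = n → β i = ∑ t ∈ Finset.Icc i n, dcoef n β t := by
  intro k
  induction k with
  | zero =>
    intro i h1 h2
    have : i = n := by omega
    subst this
    simp [dcoef]
  | succ k ih =>
    intro i h1 h2
    have hin : i < n := by omega
    have hstep : Finset.Icc i n = insert i (Finset.Icc (i + 1) n) := by
      ext x
      simp only [Finset.mem_Icc, Finset.mem_insert]
      omega
    rw [hstep, Finset.sum_insert (by simp only [Finset.mem_Icc]; omega)]
    rw [← ih (i + 1) (by omega) (by omega)]
    have hni : i ≠ n := by omega
    simp only [dcoef, if_neg hni]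
    have := hβ i h1 hin
    omega

lemma P_ge (κ : ℕ → ℕ) (n : ℕ) (hκ : ∀ i ∈ Finset.Icc 1 n, 2 ≤ κ i) :
    ∀ t, t ≤ n → 2 * t ≤ ∑ j ∈ Finset.Icc 1 t, κ j := by
  intro t
  induction t with
  | zero => simp
  | succ t ih =>
    intro h
    rw [Finset.sum_Icc_succ_top (by omega)]
    have h1 : 2 ≤ κ (t + 1) := hκ (t + 1) (by simp only [Finset.mem_Icc]; omega)
    have h2 := ih (by omega)
    omega

lemma rho_prefix (n : ℕ) (κ : ℕ → ℕ) (hκ : ∀ i ∈ Finset.Icc 1 n, 2 ≤ κ i) :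
    ∀ t, t ≤ n →
      (∑ i ∈ Finset.Icc 1 t, ∑ e ∈ Finset.Ioc
          (2 * (n - i) + (∑ j ∈ Finset.Icc 1 (i - 1), κ j) + 2)
          (2 * (n - i) + ∑ j ∈ Finset.Icc 1 i, κ j), e)
        = ∑ e ∈ Finset.Ioc (2 * n) (2 * (n - t) + ∑ j ∈ Finset.Icc 1 t, κ j), e := by
  intro t
  induction t with
  | zero => simp
  | succ t ih =>
    intro h
    have h2t : 2 * t ≤ ∑ j ∈ Finset.Icc 1 t, κ j := P_ge κ n hκ t (by omega)
    have hκt : 2 ≤ κ (t + 1) := hκ (t + 1) (by simp only [Finset.mem_Icc]; omega)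
    have e3 : (∑ j ∈ Finset.Icc 1 (t + 1), κ j) = (∑ j ∈ Finset.Icc 1 t, κ j) + κ (t + 1) :=
      Finset.sum_Icc_succ_top (by omega) κ
    rw [Finset.sum_Icc_succ_top (by omega), ih (by omega)]
    simp only [Nat.add_sub_cancel]
    have e2 : 2 * (n - (t + 1)) + (∑ j ∈ Finset.Icc 1 t, κ j) + 2
        = 2 * (n - t) + ∑ j ∈ Finset.Icc 1 t, κ j := by omega
    rw [e2]
    exact Finset.sum_Ioc_consecutive (fun e => e) (by omega) (by omega)

/-- Unique minimality of the row selection `ρ` for the weight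
`θ(r) = ∑ᵢ βᵢ |rᵢ|`.  An admissible selection assigns to each block
`i ∈ {1,…,n}` the rows `i` and `n+i` plus a set `E i` of `κᵢ - 2` extra rows,
the extra sets partitioning `{2n+1,…,K}`.  The minimizer assigns to block `i`
the extra rows `2(n-i)+K_{i-1}+3, …, 2(n-i)+K_i`; every other admissible
selection has strictly larger weight. -/
theorem theta_unique_minimizer (n : ℕ) (hn : 2 ≤ n) (κ : ℕ → ℕ)
    (hκ : ∀ i ∈ Finset.Icc 1 n, 2 ≤ κ i)
    (K : ℕ) (hK : K = ∑ i ∈ Finset.Icc 1 n, κ i)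
    (β : ℕ → ℕ) (hβ : ∀ i j, 1 ≤ i → i < j → j ≤ n → β j < β i)
    (E : ℕ → Finset ℕ)
    (hcard : ∀ i ∈ Finset.Icc 1 n, (E i).card = κ i - 2)
    (hdisj : ∀ i ∈ Finset.Icc 1 n, ∀ j ∈ Finset.Icc 1 n, i ≠ j →
      Disjoint (E i) (E j))
    (hcover : (Finset.Icc 1 n).biUnion E = Finset.Icc (2 * n + 1) K)
    (hne : ∃ i ∈ Finset.Icc 1 n,
      E i ≠ Finset.Icc (2 * (n - i) + (∑ j ∈ Finset.Icc 1 (i - 1), κ j) + 3)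
        (2 * (n - i) + ∑ j ∈ Finset.Icc 1 i, κ j)) :
    (∑ i ∈ Finset.Icc 1 n, β i * (i + (n + i) +
        ∑ e ∈ Finset.Icc (2 * (n - i) + (∑ j ∈ Finset.Icc 1 (i - 1), κ j) + 3)
          (2 * (n - i) + ∑ j ∈ Finset.Icc 1 i, κ j), e)) <
      ∑ i ∈ Finset.Icc 1 n, β i * (i + (n + i) + ∑ e ∈ E i, e) := by
  classical
  have hIoc3 : ∀ a b : ℕ, Finset.Icc (a + 3) b = Finset.Ioc (a + 2) b := by
    intro a b
    rw [show a + 3 = (a + 2) + 1 from rfl, Finset.Icc_add_one_left_eq_Ioc]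
  rw [show (∑ i ∈ Finset.Icc 1 n, β i * (i + (n + i) +
        ∑ e ∈ Finset.Icc (2 * (n - i) + (∑ j ∈ Finset.Icc 1 (i - 1), κ j) + 3)
          (2 * (n - i) + ∑ j ∈ Finset.Icc 1 i, κ j), e))
      = ∑ i ∈ Finset.Icc 1 n, β i * (i + (n + i) +
        ∑ e ∈ Finset.Ioc (2 * (n - i) + (∑ j ∈ Finset.Icc 1 (i - 1), κ j) + 2)
          (2 * (n - i) + ∑ j ∈ Finset.Icc 1 i, κ j), e) from
    Finset.sum_congr rfl fun i _ => by rw [hIoc3]]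
  simp only [mul_add, Finset.sum_add_distrib]
  apply Nat.add_lt_add_left
  -- telescoping of β
  have hβmono : ∀ i, 1 ≤ i → i < n → β (i + 1) ≤ β i := fun i h1 h2 =>
    Nat.le_of_lt (hβ i (i + 1) h1 (by omega) (by omega))
  have hswap : ∀ X : ℕ → ℕ,
      (∑ i ∈ Finset.Icc 1 n, β i * X i)
        = ∑ t ∈ Finset.Icc 1 n, dcoef n β t * ∑ i ∈ Finset.Icc 1 t, X i := by
    intro X
    have h1 : (∑ i ∈ Finset.Icc 1 n, β i * X i)
        = ∑ i ∈ Finset.Icc 1 n, ∑ t ∈ Finset.Icc i n, dcoef n β t * X i := by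
      refine Finset.sum_congr rfl fun i hi => ?_
      rw [Finset.mem_Icc] at hi
      rw [← Finset.sum_mul, ← beta_telescope n β hβmono (n - i) i hi.1 (by omega)]
    calc (∑ i ∈ Finset.Icc 1 n, β i * X i)
        = ∑ i ∈ Finset.Icc 1 n, ∑ t ∈ Finset.Icc i n, dcoef n β t * X i := h1
      _ = ∑ t ∈ Finset.Icc 1 n, ∑ i ∈ Finset.Icc 1 t, dcoef n β t * X i :=
          Finset.sum_comm' (fun x y => by simp only [Finset.mem_Icc]; omega)
      _ = ∑ t ∈ Finset.Icc 1 n, dcoef n β t * ∑ i ∈ Finset.Icc 1 t, X i :=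
          Finset.sum_congr rfl fun t _ => (Finset.mul_sum _ _ _).symm
  rw [hswap, hswap]
  -- facts about prefix unions
  have hUsub : ∀ t, t ≤ n → ∀ x ∈ (Finset.Icc 1 t).biUnion E, 2 * n < x := by
    intro t ht x hx
    have hx2 : x ∈ (Finset.Icc 1 n).biUnion E := by
      rw [Finset.mem_biUnion] at hx ⊢
      obtain ⟨i, hi, hxi⟩ := hx
      rw [Finset.mem_Icc] at hi
      exact ⟨i, Finset.mem_Icc.mpr ⟨hi.1, le_trans hi.2 ht⟩, hxi⟩
    rw [hcover, Finset.mem_Icc] at hx2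
    omega
  have hpair : ∀ t, t ≤ n → ∀ i ∈ Finset.Icc 1 t, ∀ j ∈ Finset.Icc 1 t, i ≠ j →
      Disjoint (E i) (E j) := by
    intro t ht i hi j hj hij
    rw [Finset.mem_Icc] at hi hj
    exact hdisj i (Finset.mem_Icc.mpr ⟨hi.1, hi.2.trans ht⟩)
      j (Finset.mem_Icc.mpr ⟨hj.1, hj.2.trans ht⟩) hij
  have hTE : ∀ t, t ≤ n →
      (∑ i ∈ Finset.Icc 1 t, ∑ e ∈ E i, e) = ∑ e ∈ (Finset.Icc 1 t).biUnion E, e := by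
    intro t ht
    exact (Finset.sum_biUnion (fun i hi j hj hij =>
      hpair t ht i (Finset.mem_coe.mp hi) j (Finset.mem_coe.mp hj) hij)).symm
  have hcardU : ∀ t, t ≤ n →
      ((Finset.Icc 1 t).biUnion E).card = (∑ j ∈ Finset.Icc 1 t, κ j) - 2 * t := by
    intro t ht
    rw [Finset.card_biUnion (fun i hi j hj hij => hpair t ht i hi j hj hij)]
    have h1 : ∀ i ∈ Finset.Icc 1 t, (E i).card = κ i - 2 := by
      intro i hi
      rw [Finset.mem_Icc] at hi
      exact hcard i (Finset.mem_Icc.mpr ⟨hi.1, hi.2.trans ht⟩)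
    rw [Finset.sum_congr rfl h1,
      Finset.sum_tsub_distrib _ (fun i hi => by
        rw [Finset.mem_Icc] at hi
        exact hκ i (Finset.mem_Icc.mpr ⟨hi.1, hi.2.trans ht⟩))]
    congr 1
    simp [Nat.card_Icc, mul_comm]
  -- key comparison for each prefix
  have hmin : ∀ t, 1 ≤ t → t ≤ n →
      (∑ i ∈ Finset.Icc 1 t, ∑ e ∈ Finset.Ioc
          (2 * (n - i) + (∑ j ∈ Finset.Icc 1 (i - 1), κ j) + 2)
          (2 * (n - i) + ∑ j ∈ Finset.Icc 1 i, κ j), e)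
        ≤ (∑ i ∈ Finset.Icc 1 t, ∑ e ∈ E i, e)
      ∧ ((Finset.Icc 1 t).biUnion E
            ≠ Finset.Ioc (2 * n) (2 * (n - t) + ∑ j ∈ Finset.Icc 1 t, κ j) →
          (∑ i ∈ Finset.Icc 1 t, ∑ e ∈ Finset.Ioc
              (2 * (n - i) + (∑ j ∈ Finset.Icc 1 (i - 1), κ j) + 2)
              (2 * (n - i) + ∑ j ∈ Finset.Icc 1 i, κ j), e)
            < ∑ i ∈ Finset.Icc 1 t, ∑ e ∈ E i, e) := by
    intro t h1 h2
    have hP := P_ge κ n hκ t h2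
    have hend : 2 * n + ((∑ j ∈ Finset.Icc 1 t, κ j) - 2 * t)
        = 2 * (n - t) + ∑ j ∈ Finset.Icc 1 t, κ j := by omega
    obtain ⟨hle, hlt⟩ := min_sum_aux (2 * n) ((∑ j ∈ Finset.Icc 1 t, κ j) - 2 * t)
      ((Finset.Icc 1 t).biUnion E) (hUsub t h2) (hcardU t h2)
    rw [hend] at hle hlt
    rw [rho_prefix n κ hκ t h2, hTE t h2]
    exact ⟨hle, hlt⟩
  -- existence of a strict prefix
  have hwit : ∃ t, 1 ≤ t ∧ t < n ∧ (Finset.Icc 1 t).biUnion E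
      ≠ Finset.Ioc (2 * n) (2 * (n - t) + ∑ j ∈ Finset.Icc 1 t, κ j) := by
    by_contra hcon
    push_neg at hcon
    obtain ⟨i₀, hi₀, hEne⟩ := hne
    rw [Finset.mem_Icc] at hi₀
    apply hEne
    have hU : ∀ t, t ≤ n → (Finset.Icc 1 t).biUnion E
        = Finset.Ioc (2 * n) (2 * (n - t) + ∑ j ∈ Finset.Icc 1 t, κ j) := by
      intro t ht
      rcases Nat.eq_zero_or_pos t with h0 | hpos
      · subst h0; simp
      · rcases Nat.lt_or_ge t n with hlt | hge
        · exact hcon t hpos hlt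
        · have hteq : t = n := le_antisymm ht hge
          subst hteq
          rw [hcover, hK]
          simp [Nat.sub_self, ← Finset.Icc_add_one_left_eq_Ioc]
    have hstep : Finset.Icc 1 i₀ = insert i₀ (Finset.Icc 1 (i₀ - 1)) := by
      ext x
      simp only [Finset.mem_Icc, Finset.mem_insert]
      omega
    have hdisj0 : Disjoint (E i₀) ((Finset.Icc 1 (i₀ - 1)).biUnion E) := by
      rw [Finset.disjoint_biUnion_right]
      intro j hj
      rw [Finset.mem_Icc] at hj
      exact hdisj i₀ (Finset.mem_Icc.mpr hi₀)
        j (Finset.mem_Icc.mpr ⟨hj.1, by omega⟩) (by omega)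
    have hEeq : E i₀ = (Finset.Icc 1 i₀).biUnion E \ ((Finset.Icc 1 (i₀ - 1)).biUnion E) := by
      rw [hstep, Finset.biUnion_insert, Finset.union_sdiff_right,
        Finset.sdiff_eq_self_iff_disjoint.mpr hdisj0]
    rw [hEeq, hU i₀ hi₀.2, hU (i₀ - 1) (by omega)]
    have h1 : (i₀ - 1) + 1 = i₀ := by omega
    have hPstep : (∑ j ∈ Finset.Icc 1 i₀, κ j)
        = (∑ j ∈ Finset.Icc 1 (i₀ - 1), κ j) + κ i₀ := by
      calc (∑ j ∈ Finset.Icc 1 i₀, κ j) = ∑ j ∈ Finset.Icc 1 ((i₀ - 1) + 1), κ j := by rw [h1]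
        _ = (∑ j ∈ Finset.Icc 1 (i₀ - 1), κ j) + κ ((i₀ - 1) + 1) :=
            Finset.sum_Icc_succ_top (by omega) κ
        _ = _ := by rw [h1]
    have hP1 := P_ge κ n hκ (i₀ - 1) (by omega)
    have hκ0 : 2 ≤ κ i₀ := hκ i₀ (Finset.mem_Icc.mpr hi₀)
    ext x
    simp only [Finset.mem_sdiff, Finset.mem_Ioc, Finset.mem_Icc, not_and, not_le]
    omega
  -- conclude
  apply Finset.sum_lt_sum
  · intro t ht
    rw [Finset.mem_Icc] at ht
    exact Nat.mul_le_mul_left _ (hmin t ht.1 ht.2).1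
  · obtain ⟨t, ht1, ht2, htne⟩ := hwit
    refine ⟨t, Finset.mem_Icc.mpr ⟨ht1, by omega⟩, ?_⟩
    have hstrict := (hmin t ht1 (by omega)).2 htne
    have hdpos : 0 < dcoef n β t := by
      have := hβ t (t + 1) ht1 (by omega) (by omega)
      simp only [dcoef, if_neg (by omega : t ≠ n)]
      omega
    exact mul_lt_mul_of_pos_left hstrict hdpos
end

section
/- Fix d ≥ 3, 2 ≤ r ≤ d−1, and 1 ≤ i ≤ r. For t > 0 and ζ > 0, let γ_i(t; ζ) ∈ ℝ^d be the curve whose i-th coordinate is t, whose coordinates r+1, ..., d are t^2, ..., t^{d−r+1}, and whose remaining r−1 coordinates (positions 1,...,r excluding i, in increasing order) are ζ t^{d−r+2}, ζ t^{d−r+3}, ..., ζ t^d. Then for any d+1 parameter values 0 < t_1 < t_2 < ... < t_{d+1}, the points γ_i(t_1; ζ), ..., γ_i(t_{d+1}; ζ) are affinely independent; specifically, the (d+1)×(d+1) determinant F(ζ) with columns (1, γ_i(t_j; ζ)) satisfies F(ζ) = (−1)^{i−1+(r−1)(d−r)} ζ^{r−1} VD(t_1, ..., t_{d+1}) ≠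 0. -/
open Finset

/-- The perturbed moment-like curve `γ_i(t; ζ) ∈ ℝ^d` (coordinates 0-indexed,
`i` 1-indexed): coordinate `i-1` is `t`; coordinates `r, …, d-1` are
`t^2, …, t^{d-r+1}`; the remaining `r-1` coordinates are, in increasing
position order, `ζ t^{d-r+2}, …, ζ t^d`. -/
noncomputable def gammaCurve (d r i : ℕ) (ζ t : ℝ) : Fin d → ℝ := fun c =>
  if (c : ℕ) + 1 = i then t
  else if r ≤ (c : ℕ) then t ^ ((c : ℕ) - r + 2)
  else ζ * t ^ (d - r + 2 + (if (c : ℕ) + 1 < i then (c : ℕ) else (c : ℕ) - 1))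

/-!
Row `a` of the matrix is `w_a (t_1^{e(a)}, …, t_{d+1}^{e(a)})`, where exactly `r - 1` of the
weights `w_a` equal `ζ`, the others equal `1`, and `a ↦ e(a)` is a permutation of `{0, …, d}`.
Hence the determinant is `ζ^{r-1} sign(e) VD`. The exponent permutation `e` is the cycle
`(1 2 … i)` followed by the rotation of `{2, …, d}` by `d - r` steps, so its sign is
`(-1)^{i-1} ((-1)^{d-2})^{d-r}`, and `(d-2)(d-r) ≡ (r-1)(d-r) mod 2` as `(d-r-1)(d-r)` is even.
-/

open Equiv

namespace Fin

theorem val_cycleIcc_pow_of_le_of_le {n : ℕ} {i j x : Fin (n + 1)} (hix : i ≤ x) (hxj : x ≤ j)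
    (k : ℕ) : ((cycleIcc i j ^ k) x : ℕ) = i + ((x : ℕ) - i + k) % ((j : ℕ) - i + 1) := by
  rw [le_iff_val_le_val] at hix hxj
  induction k with
  | zero =>
    rw [pow_zero, Perm.one_apply, Nat.add_zero ((x : ℕ) - i),
      Nat.mod_eq_of_lt (by omega : (x : ℕ) - i < j - i + 1)]
    omega
  | succ k ih =>
    set y := (cycleIcc i j ^ k) x
    set m := ((x : ℕ) - i + k) % ((j : ℕ) - i + 1) with hm
    have hmL : m < (j : ℕ) - i + 1 := Nat.mod_lt _ (by omega)
    have hiy : i ≤ y := by rw [le_iff_val_le_val, ih]; omega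
    have hyj : y ≤ j := by rw [le_iff_val_le_val, ih]; omega
    rw [pow_succ', Perm.mul_apply, cycleIcc_of_le_of_le hiy hyj, ← Nat.add_assoc,
      ← Nat.mod_add_mod, ← hm]
    split_ifs with hy
    · rw [← val_inj, ih] at hy
      rw [show m + 1 = (j : ℕ) - i + 1 by omega, Nat.mod_self]
      rfl
    · have hyj' : (y : ℕ) < j := by rw [← val_inj] at hy; omega
      rw [val_add_one_of_lt (lt_of_lt_of_le hyj' (le_last j)), ih,
        Nat.mod_eq_of_lt (by omega : m + 1 < (j : ℕ) - i + 1)]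
      omega

theorem cycleIcc_pow_of_lt {n : ℕ} {i j x : Fin n} (hxi : x < i) (k : ℕ) :
    (cycleIcc i j ^ k) x = x :=
  Perm.pow_apply_eq_self_of_apply_eq_self (cycleIcc_of_lt hxi) k

end Fin

theorem Matrix.det_of_mul_pow_perm {R : Type*} [CommRing R] {n : ℕ} (σ : Perm (Fin n))
    (w v : Fin n → R) :
    (Matrix.of fun a b => w a * v b ^ (σ a : ℕ)).det =
      (∏ a, w a) * Perm.sign σ * ∏ j, ∏ k ∈ Ioi j, (v k - v j) := by
  have hV : (Matrix.of fun a b => w a * v b ^ (σ a : ℕ)) =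
      Matrix.of fun a b => w a * (vandermonde v).transpose.submatrix σ id a b := rfl
  rw [hV, det_mul_column, det_permute, det_transpose, det_vandermonde, mul_assoc]

-- Row `a ≥ 1` of the determinant holds coordinate `a - 1` of the curve; row `0` is constant.
def gammaExponent (d r i a : ℕ) : ℕ :=
  if a = 0 then 0
  else if a = i then 1
  else if a < i then d - r + 1 + a
  else if a ≤ r then d - r + a
  else a - r + 1

noncomputable def gammaWeight (r i : ℕ) (ζ : ℝ) (a : ℕ) : ℝ :=
  if 1 ≤ a ∧ a ≤ r ∧ a ≠ i then ζ else 1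

theorem gammaCurve_apply {d r i : ℕ} (hi : 1 ≤ i) (hir : i ≤ r) (ζ t : ℝ) (c : Fin d) :
    gammaCurve d r i ζ t c = gammaWeight r i ζ (c + 1) * t ^ gammaExponent d r i (c + 1) := by
  simp only [gammaCurve, gammaWeight, gammaExponent, Nat.add_one_ne_zero, if_false]
  split_ifs <;> (try simp only [one_mul, pow_one]) <;>
    first | omega | rfl | (congr 1; omega) | (congr 2; omega)

theorem prod_gammaWeight {d r i : ℕ} (hi : 1 ≤ i) (hir : i ≤ r) (hrd : r ≤ d) (ζ : ℝ) :
    ∏ a : Fin (d + 1), gammaWeight r i ζ a = ζ ^ (r - 1) := by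
  have hfilter :
      (range (d + 1)).filter (fun a => 1 ≤ a ∧ a ≤ r ∧ a ≠ i) = (Icc 1 r).erase i := by
    ext a
    simp only [mem_filter, mem_range, mem_erase, mem_Icc]
    omega
  rw [Fin.prod_univ_eq_prod_range (gammaWeight r i ζ)]
  simp only [gammaWeight]
  rw [prod_ite, prod_const, prod_const_one, mul_one, hfilter,
    card_erase_of_mem (mem_Icc.2 ⟨hi, hir⟩), Nat.card_Icc, Nat.add_sub_cancel]

section gammaPerm

open Fin.NatCast

theorem val_cycleIcc_one_natCast {d i : ℕ} (hi : 1 ≤ i) (hid : i ≤ d) (a : Fin (d + 1)) :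
    (Fin.cycleIcc 1 (i : Fin (d + 1)) a : ℕ) =
      if (a : ℕ) = 0 then 0 else if (a : ℕ) < i then (a : ℕ) + 1
      else if (a : ℕ) = i then 1 else (a : ℕ) := by
  have h1 : ((1 : Fin (d + 1)) : ℕ) = 1 := by rw [Fin.val_one', Nat.mod_eq_of_lt (by omega)]
  have hi' : ((i : Fin (d + 1)) : ℕ) = i := Fin.val_cast_of_lt (by omega)
  rcases lt_trichotomy (a : ℕ) i with hai | hai | hai
  · rcases Nat.eq_zero_or_pos a with ha | ha
    · rw [Fin.cycleIcc_of_lt (Fin.lt_def.2 (by omega)), if_pos ha, ha]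
    · rw [Fin.cycleIcc_of_ge_of_lt (Fin.le_def.2 (by omega)) (Fin.lt_def.2 (by omega)),
        Fin.val_add_one_of_lt (Fin.lt_def.2 (by rw [Fin.val_last]; omega)), if_neg (by omega),
        if_pos hai]
  · rw [show a = (i : Fin (d + 1)) from Fin.ext (hai.trans hi'.symm),
      Fin.cycleIcc_of_last (Fin.le_def.2 (by omega)), h1, hi', if_neg (by omega),
      if_neg (lt_irrefl i), if_pos rfl]
  · rw [Fin.cycleIcc_of_gt (Fin.lt_def.2 (by omega)), if_neg (by omega), if_neg (by omega),
      if_neg (by omega)]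

theorem val_cycleIcc_two_last_pow {d r : ℕ} (hr : 1 ≤ r) (hrd : r < d) (x : Fin (d + 1)) :
    ((Fin.cycleIcc 2 (Fin.last d) ^ (d - r)) x : ℕ) =
      if (x : ℕ) < 2 then (x : ℕ) else if (x : ℕ) ≤ r then (x : ℕ) + (d - r)
      else (x : ℕ) - r + 1 := by
  have h2 : ((2 : Fin (d + 1)) : ℕ) = 2 := by
    rw [Fin.coe_ofNat_eq_mod, Nat.mod_eq_of_lt (by omega)]
  split_ifs with hx2 hxr
  · rw [Fin.cycleIcc_pow_of_lt (Fin.lt_def.2 (by omega))]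
  all_goals
    rw [Fin.val_cycleIcc_pow_of_le_of_le (Fin.le_def.2 (by omega)) (Fin.le_last x), h2,
      Fin.val_last, show d - 2 + 1 = d - 1 by omega]
  · rw [Nat.mod_eq_of_lt (by omega : (x : ℕ) - 2 + (d - r) < d - 1)]
    omega
  · rw [Nat.mod_eq_sub_mod (by omega : d - 1 ≤ (x : ℕ) - 2 + (d - r)),
      Nat.mod_eq_of_lt (by omega : (x : ℕ) - 2 + (d - r) - (d - 1) < d - 1)]
    omega

def gammaPerm (d r i : ℕ) : Perm (Fin (d + 1)) :=
  Fin.cycleIcc 2 (Fin.last d) ^ (d - r) * Fin.cycleIcc 1 (i : Fin (d + 1))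

variable {d r i : ℕ}

theorem val_gammaPerm (hi : 1 ≤ i) (hir : i ≤ r) (hrd : r < d) (a : Fin (d + 1)) :
    (gammaPerm d r i a : ℕ) = gammaExponent d r i a := by
  rw [gammaPerm, Perm.mul_apply, val_cycleIcc_two_last_pow (by omega) hrd,
    val_cycleIcc_one_natCast hi (by omega), gammaExponent]
  split_ifs <;> omega

theorem sign_gammaPerm (hi : 1 ≤ i) (hir : i ≤ r) (hrd : r < d) :
    Perm.sign (gammaPerm d r i) = (-1) ^ (i - 1 + (r - 1) * (d - r)) := by
  have h1 : ((1 : Fin (d + 1)) : ℕ) = 1 := by rw [Fin.val_one', Nat.mod_eq_of_lt (by omega)]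
  have h2 : ((2 : Fin (d + 1)) : ℕ) = 2 := by
    rw [Fin.coe_ofNat_eq_mod, Nat.mod_eq_of_lt (by omega)]
  have hi' : ((i : Fin (d + 1)) : ℕ) = i := Fin.val_cast_of_lt (by omega)
  have hrot : (2 : Fin (d + 1)) ≤ Fin.last d := Fin.le_def.2 (by rw [h2, Fin.val_last]; omega)
  have hcyc : (1 : Fin (d + 1)) ≤ (i : Fin (d + 1)) := Fin.le_def.2 (by rw [h1, hi']; exact hi)
  rw [gammaPerm, map_mul, map_pow, Fin.sign_cycleIcc_of_le hrot, Fin.sign_cycleIcc_of_le hcyc,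
    Fin.val_last, h1, h2, hi', ← pow_mul, ← pow_add]
  obtain ⟨s, rfl⟩ : ∃ s, d = r + 1 + s := ⟨d - r - 1, by omega⟩
  rw [show r + 1 + s - 2 = (r - 1) + s by omega, show r + 1 + s - r = s + 1 by omega, add_mul,
    add_comm, ← add_assoc, pow_add, (Nat.even_mul_succ_self s).neg_one_pow, mul_one]

end gammaPerm

/-- For `d+1` strictly increasing positive parameters, the points
`γ_i(t_j; ζ)` are affinely independent; the `(d+1)×(d+1)` determinant with
columns `(1, γ_i(t_j; ζ))` equals
`(-1)^{i-1+(r-1)(d-r)} ζ^{r-1} VD(t_1,…,t_{d+1}) ≠ 0`. -/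
theorem gammaCurve_affinely_independent (d r i : ℕ)
    (hrd : r ≤ d - 1) (hi1 : 1 ≤ i) (hir : i ≤ r)
    (ζ : ℝ) (hζ : 0 < ζ) (t : Fin (d + 1) → ℝ)
    (htmono : StrictMono t) :
    (Matrix.of fun a b : Fin (d + 1) =>
        if h : (a : ℕ) = 0 then (1 : ℝ)
        else gammaCurve d r i ζ (t b) ⟨(a : ℕ) - 1, by
          have := a.isLt; omega⟩).det =
      (-1 : ℝ) ^ (i - 1 + (r - 1) * (d - r)) * ζ ^ (r - 1) *
        ∏ j : Fin (d + 1), ∏ k ∈ Finset.Ioi j, (t k - t j) ∧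
    (Matrix.of fun a b : Fin (d + 1) =>
        if h : (a : ℕ) = 0 then (1 : ℝ)
        else gammaCurve d r i ζ (t b) ⟨(a : ℕ) - 1, by
          have := a.isLt; omega⟩).det ≠ 0 := by
  have hrd' : r < d := by omega
  have hM : (Matrix.of fun a b : Fin (d + 1) =>
        if h : (a : ℕ) = 0 then (1 : ℝ)
        else gammaCurve d r i ζ (t b) ⟨(a : ℕ) - 1, by have := a.isLt; omega⟩) =
      Matrix.of fun a b : Fin (d + 1) =>
        gammaWeight r i ζ a * t b ^ (gammaPerm d r i a : ℕ) := by
    ext a b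
    rw [Matrix.of_apply, Matrix.of_apply, val_gammaPerm hi1 hir hrd']
    split_ifs with ha
    · simp [gammaWeight, gammaExponent, ha]
    · rw [gammaCurve_apply hi1 hir, Nat.sub_add_cancel (Nat.one_le_iff_ne_zero.2 ha)]
  have hVD : ∏ j : Fin (d + 1), ∏ k ∈ Ioi j, (t k - t j) ≠ 0 := by
    rw [← Matrix.det_vandermonde]
    exact Matrix.det_vandermonde_ne_zero_iff.2 htmono.injective
  rw [hM, Matrix.det_of_mul_pow_perm, prod_gammaWeight hi1 hir hrd'.le,
    sign_gammaPerm hi1 hir hrd']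
  push_cast
  exact ⟨by ring, by positivity⟩
end

section
/- Fix d ≥ 3, 2 ≤ r ≤ d−1, 1 ≤ i ≤ r, and ζ > 0. Let P_i be the convex hull of n points γ_i(t_1; ζ), ..., γ_i(t_n; ζ) on the perturbed moment-like curve, with 0 < t_1 < t_2 < ... < t_n and n ≥ d+1. Then P_i is a neighborly d-polytope: it is d-dimensional, and every subset of its vertices of size at most ⌊d/2⌋ is the vertex set of a face of P_i. -/
open Finset

section Aux

open Polynomial

/-- exponent of the monomial at coordinate `c` -/
def expE (d r i : ℕ) (c : Fin d) : ℕ :=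
  if (c : ℕ) + 1 = i then 1
  else if r ≤ (c : ℕ) then (c : ℕ) - r + 2
  else d - r + 2 + (if (c : ℕ) + 1 < i then (c : ℕ) else (c : ℕ) - 1)

/-- scalar of the monomial at coordinate `c` -/
noncomputable def sclE (r i : ℕ) (ζ : ℝ) {d : ℕ} (c : Fin d) : ℝ :=
  if (c : ℕ) + 1 = i then 1 else if r ≤ (c : ℕ) then 1 else ζ

lemma gamma_eq (d r i : ℕ) (ζ t : ℝ) (c : Fin d) :
    gammaCurve d r i ζ t c = sclE r i ζ c * t ^ expE d r i c := by
  unfold gammaCurve sclE expE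
  split_ifs <;> ring

variable {d r i : ℕ}

lemma sclE_ne {ζ : ℝ} (hζ : 0 < ζ) (c : Fin d) : sclE r i ζ c ≠ 0 := by
  unfold sclE; split_ifs <;> simp [hζ.ne']

lemma expE_mem (hd : 3 ≤ d) (hr2 : 2 ≤ r) (hrd : r ≤ d - 1) (hi1 : 1 ≤ i) (hir : i ≤ r)
    (c : Fin d) : expE d r i c ∈ Finset.Icc 1 d := by
  have := c.isLt
  simp only [expE, Finset.mem_Icc]
  split_ifs <;> omega

lemma expE_inj (hd : 3 ≤ d) (hr2 : 2 ≤ r) (hrd : r ≤ d - 1) (hi1 : 1 ≤ i) (hir : i ≤ r) :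
    Function.Injective (expE d r i) := by
  intro c1 c2 h
  have h1 := c1.isLt
  have h2 := c2.isLt
  apply Fin.ext
  simp only [expE] at h
  split_ifs at h <;> omega

lemma expE_image (hd : 3 ≤ d) (hr2 : 2 ≤ r) (hrd : r ≤ d - 1) (hi1 : 1 ≤ i) (hir : i ≤ r) :
    Finset.image (expE d r i) Finset.univ = Finset.Icc 1 d := by
  apply Finset.eq_of_subset_of_card_le
  · intro m hm
    obtain ⟨c, _, rfl⟩ := Finset.mem_image.mp hm
    exact expE_mem hd hr2 hrd hi1 hir c
  · rw [Finset.card_image_of_injective _ (expE_inj hd hr2 hrd hi1 hir)]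
    simp [Nat.card_Icc]

/-- The linear functional associated to a coefficient sequence. -/
noncomputable def Lmap (d r i : ℕ) (ζ : ℝ) (a : ℕ → ℝ) : (Fin d → ℝ) →ₗ[ℝ] ℝ :=
  ∑ c : Fin d, (a (expE d r i c) / sclE r i ζ c) • LinearMap.proj c

lemma Lmap_gamma (hd : 3 ≤ d) (hr2 : 2 ≤ r) (hrd : r ≤ d - 1) (hi1 : 1 ≤ i) (hir : i ≤ r)
    {ζ : ℝ} (hζ : 0 < ζ) {p : ℝ[X]} (hp : p.natDegree ≤ d) (x : ℝ) :
    Lmap d r i ζ p.coeff (gammaCurve d r i ζ x) = p.eval x - p.coeff 0 := by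
  have h1 : Lmap d r i ζ p.coeff (gammaCurve d r i ζ x)
      = ∑ c : Fin d, p.coeff (expE d r i c) * x ^ expE d r i c := by
    simp only [Lmap, LinearMap.coe_sum, Finset.sum_apply, LinearMap.smul_apply,
      LinearMap.proj_apply, smul_eq_mul]
    refine Finset.sum_congr rfl fun c _ => ?_
    rw [gamma_eq]
    field_simp [sclE_ne hζ c]
  have himg : ∑ m ∈ Finset.image (expE d r i) Finset.univ, p.coeff m * x ^ m
      = ∑ c : Fin d, p.coeff (expE d r i c) * x ^ expE d r i c :=
    Finset.sum_image (fun c _ c' _ h => expE_inj hd hr2 hrd hi1 hir h)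
  rw [h1, ← himg, expE_image hd hr2 hrd hi1 hir]
  have h2 : Finset.range (d + 1) = insert 0 (Finset.Icc 1 d) := by
    ext m; simp only [Finset.mem_range, Finset.mem_insert, Finset.mem_Icc]; omega
  have h3 := Polynomial.eval_eq_sum_range' (p := p) (Nat.lt_succ_of_le hp) x
  rw [h2, Finset.sum_insert (by simp)] at h3
  rw [h3]; ring

end Aux

/-- The convex hull of `n ≥ d+1` points on the perturbed moment-like curve
`γ_i(·; ζ)`, at strictly increasing positive parameter values, is a neighborly
`d`-polytope: its vertex set affinely spans `ℝ^d`, and every subset of at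
most `⌊d/2⌋` of the points is the set of points lying on some supporting
hyperplane (i.e. is the vertex set of a face). -/
theorem gammaCurve_polytope_neighborly (d r i n : ℕ)
    (hd : 3 ≤ d) (hr2 : 2 ≤ r) (hrd : r ≤ d - 1) (hi1 : 1 ≤ i) (hir : i ≤ r)
    (hn : d + 1 ≤ n) (ζ : ℝ) (hζ : 0 < ζ)
    (t : Fin n → ℝ) (htpos : ∀ j, 0 < t j) (htmono : StrictMono t) :
    (affineSpan ℝ (Set.range fun j => gammaCurve d r i ζ (t j)) = ⊤) ∧
    ∀ V : Finset (Fin n), V.card ≤ d / 2 →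
      ∃ (f : (Fin d → ℝ) →ₗ[ℝ] ℝ) (c : ℝ),
        (∀ x ∈ convexHull ℝ (Set.range fun j => gammaCurve d r i ζ (t j)),
          f x ≤ c) ∧
        (∀ j : Fin n, f (gammaCurve d r i ζ (t j)) = c ↔ j ∈ V) := by
  classical
  have hn0 : 0 < n := by omega
  constructor
  · -- affine span is everything
    set S : Set (Fin d → ℝ) := Set.range fun j => gammaCurve d r i ζ (t j) with hS
    have hne : S.Nonempty := ⟨_, ⟨⟨0, hn0⟩, rfl⟩⟩
    rw [AffineSubspace.affineSpan_eq_top_iff_vectorSpan_eq_top_of_nonempty ℝ (Fin d → ℝ) (Fin d → ℝ) hne]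
    by_contra hlt
    obtain ⟨f, hf0, hfbot⟩ := Submodule.exists_dual_map_eq_bot_of_lt_top
      (p := vectorSpan ℝ S) (lt_top_iff_ne_top.mpr hlt) inferInstance
    have hvan : ∀ v ∈ vectorSpan ℝ S, f v = 0 := by
      intro v hv
      have : f v ∈ (vectorSpan ℝ S).map f := ⟨v, hv, rfl⟩
      rwa [hfbot, Submodule.mem_bot] at this
    set j0 : Fin n := ⟨0, hn0⟩
    have hconst : ∀ j, f (gammaCurve d r i ζ (t j)) = f (gammaCurve d r i ζ (t j0)) := by
      intro j
      have hmem : ∀ j : Fin n, gammaCurve d r i ζ (t j) ∈ S := fun j => ⟨j, rfl⟩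
      have := hvan _ (vsub_mem_vectorSpan ℝ (hmem j) (hmem j0))
      have h2 : f (gammaCurve d r i ζ (t j) - gammaCurve d r i ζ (t j0)) = 0 := this
      rw [map_sub, sub_eq_zero] at h2
      exact h2
    set q : Polynomial ℝ :=
      (∑ c : Fin d, Polynomial.C (f ((fun j => if c = j then (1:ℝ) else 0)) * sclE r i ζ c)
        * Polynomial.X ^ expE d r i c) - Polynomial.C (f (gammaCurve d r i ζ (t j0))) with hq
    have hevalq : ∀ x : ℝ,
        q.eval x = f (gammaCurve d r i ζ x) - f (gammaCurve d r i ζ (t j0)) := by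
      intro x
      have hfx : f (gammaCurve d r i ζ x)
          = ∑ c : Fin d, gammaCurve d r i ζ x c • f (fun j => if c = j then (1:ℝ) else 0) :=
        LinearMap.pi_apply_eq_sum_univ f _
      simp only [hq, Polynomial.eval_sub, Polynomial.eval_finset_sum, Polynomial.eval_mul,
        Polynomial.eval_C, Polynomial.eval_pow, Polynomial.eval_X, hfx, smul_eq_mul]
      congr 1
      refine Finset.sum_congr rfl fun c _ => ?_
      rw [gamma_eq]
      ring
    have hdeg : q.natDegree ≤ d := by
      refine le_trans (Polynomial.natDegree_sub_le _ _) ?_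
      simp only [Polynomial.natDegree_C, max_le_iff]
      refine ⟨Polynomial.natDegree_sum_le_of_forall_le _ _ fun c _ => ?_, Nat.zero_le d⟩
      refine le_trans (Polynomial.natDegree_C_mul_le _ _) ?_
      rw [Polynomial.natDegree_X_pow]
      exact (Finset.mem_Icc.mp (expE_mem hd hr2 hrd hi1 hir c)).2
    have hq0 : q = 0 := by
      refine Polynomial.eq_zero_of_natDegree_lt_card_of_eval_eq_zero q htmono.injective
        (fun j => ?_) ?_
      · rw [hevalq, hconst j, sub_self]
      · rw [Fintype.card_fin]; omega
    have hcoeff : ∀ c : Fin d, f ((fun j => if c = j then (1:ℝ) else 0)) = 0 := by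
      intro c0
      have h1 : q.coeff (expE d r i c0) = f ((fun j => if c0 = j then (1:ℝ) else 0)) * sclE r i ζ c0 := by
        simp only [hq, Polynomial.coeff_sub, Polynomial.finset_sum_coeff,
          Polynomial.coeff_C_mul_X_pow, Polynomial.coeff_C]
        have he1 : 1 ≤ expE d r i c0 := (Finset.mem_Icc.mp (expE_mem hd hr2 hrd hi1 hir c0)).1
        rw [Finset.sum_eq_single c0]
        · have h0 : expE d r i c0 ≠ 0 := by omega
          simp [h0]
        · intro c _ hc
          have : expE d r i c0 ≠ expE d r i c :=
            fun h => hc (expE_inj hd hr2 hrd hi1 hir h.symm)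
          simp [this]
        · simp
      rw [hq0, Polynomial.coeff_zero] at h1
      have := sclE_ne (r := r) (i := i) hζ c0
      rcases mul_eq_zero.mp h1.symm with h | h
      · exact h
      · exact absurd h this
    apply hf0
    refine LinearMap.ext fun x => ?_
    rw [LinearMap.pi_apply_eq_sum_univ f x]
    simp [hcoeff]
  · -- neighborliness
    intro V hV
    set p : Polynomial ℝ := ∏ v ∈ V, (Polynomial.X - Polynomial.C (t v)) ^ 2 with hp
    have hdeg : p.natDegree ≤ d := by
      refine le_trans (Polynomial.natDegree_prod_le _ _) ?_
      have h1 : ∀ v ∈ V, ((Polynomial.X - Polynomial.C (t v)) ^ 2).natDegree = 2 := by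
        intro v _
        rw [Polynomial.natDegree_pow, Polynomial.natDegree_X_sub_C]
      rw [Finset.sum_congr rfl h1, Finset.sum_const, smul_eq_mul]
      omega
    have hevalp : ∀ x : ℝ, p.eval x = ∏ v ∈ V, (x - t v) ^ 2 := by
      intro x
      simp [hp, Polynomial.eval_prod]
    have hpnn : ∀ x : ℝ, 0 ≤ p.eval x := by
      intro x
      rw [hevalp]
      exact Finset.prod_nonneg fun v _ => sq_nonneg _
    refine ⟨-(Lmap d r i ζ p.coeff), p.coeff 0, ?_, ?_⟩
    · have hconv : Convex ℝ {x : Fin d → ℝ | (-(Lmap d r i ζ p.coeff)) x ≤ p.coeff 0} :=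
        convex_halfSpace_le (LinearMap.isLinear _) _
      intro x hx
      refine convexHull_min ?_ hconv hx
      rintro y ⟨j, rfl⟩
      show (-(Lmap d r i ζ p.coeff)) (gammaCurve d r i ζ (t j)) ≤ p.coeff 0
      rw [LinearMap.neg_apply, Lmap_gamma hd hr2 hrd hi1 hir hζ hdeg]
      have := hpnn (t j)
      linarith
    · intro j
      rw [LinearMap.neg_apply, Lmap_gamma hd hr2 hrd hi1 hir hζ hdeg]
      constructor
      · intro h
        have hev : p.eval (t j) = 0 := by linear_combination -h
        rw [hevalp] at hev
        obtain ⟨v, hv, hv0⟩ := Finset.prod_eq_zero_iff.mp hev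
        have : t j = t v := by
          have := pow_eq_zero_iff (n := 2) (by norm_num) |>.mp hv0
          linarith
        rwa [htmono.injective this]
      · intro hj
        have hev : p.eval (t j) = 0 := by
          rw [hevalp]
          exact Finset.prod_eq_zero hj (by simp)
        rw [hev]; ring
end
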